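/- arXiv:2602.12729 — 3 statements merged into one kernel-verified Lean document; each statement's English description precedes it below -/
import Mathlib

section
/- Fix d ≥ 2, an integer k with 1 ≤ k ≤ d−1, and θ ∈ [0,1). Suppose nonnegative reals σ₁ ≥ σ₂ ≥ … ≥ σ_{k+1} satisfy ∑_{j=1}^{k+1} σⱼ² = 1 and σ_{k+1} ≤ (θ/k)·∑_{j=1}^{k} σⱼ (with σ_{k+1} = 0 when θ = 0). Then ∑_{j=1}^{k+1} σⱼ ≤ (k+θ)/√(k+θ²). -/
/-!
Write `S = σ₁ + ⋯ + σ_k` and `t = σ_{k+1}`. The identity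
`(k + θ²)(S + t) + (1 - θ)(θ S - k t) = (k + θ)(S + θ t)`, together with `θ ≤ 1` and the ratio
constraint `k t ≤ θ S`, gives `(k + θ²)(S + t) ≤ (k + θ)(S + θ t)`; Cauchy–Schwarz against the weight
vector `(1, …, 1, θ)` bounds `S + θ t` by `√(k + θ²)`. Equality holds for `σ₁ = ⋯ = σ_k` and
`σ_{k+1} = θ σ₁`.
-/

open Finset

lemma sum_Icc_add_mul_le_sqrt_mul_sqrt (σ : ℕ → ℝ) (n : ℕ) (θ : ℝ) :
    ∑ j ∈ Icc 1 n, σ j + θ * σ (n + 1) ≤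
      √(n + θ ^ 2) * √(∑ j ∈ Icc 1 (n + 1), σ j ^ 2) := by
  have hcs := Real.sum_mul_le_sqrt_mul_sqrt (Icc 1 (n + 1)) (fun j ↦ if j ≤ n then 1 else θ) σ
  rw [sum_Icc_succ_top (by omega), sum_Icc_succ_top (by omega), if_neg (by omega)] at hcs
  have hweight : ∀ j ∈ Icc 1 n, (if j ≤ n then (1 : ℝ) else θ) = 1 := fun j hj ↦
    if_pos (mem_Icc.1 hj).2
  have hdot : ∑ j ∈ Icc 1 n, (if j ≤ n then 1 else θ) * σ j = ∑ j ∈ Icc 1 n, σ j :=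
    sum_congr rfl fun j hj ↦ by rw [hweight j hj, one_mul]
  have hnormsq : ∑ j ∈ Icc 1 n, (if j ≤ n then (1 : ℝ) else θ) ^ 2 = n := by
    rw [sum_congr rfl fun j hj ↦ by rw [hweight j hj, one_pow]]
    simp
  rwa [hdot, hnormsq] at hcs

lemma add_mul_le_of_mul_le {k θ S t : ℝ} (hθ : θ ≤ 1) (h : k * t ≤ θ * S) :
    (k + θ ^ 2) * (S + t) ≤ (k + θ) * (S + θ * t) := by
  nlinarith [mul_le_mul_of_nonneg_left h (sub_nonneg.2 hθ)]

theorem stmt_3_general (k : ℕ) (hk1 : 1 ≤ k)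
    (θ : ℝ) (hθ : θ ∈ Set.Ico (0:ℝ) 1) (σ : ℕ → ℝ)
    (hnorm : ∑ j ∈ Finset.Icc 1 (k+1), (σ j)^2 = 1)
    (hratio : σ (k+1) ≤ θ / k * ∑ j ∈ Finset.Icc 1 k, σ j) :
    ∑ j ∈ Finset.Icc 1 (k+1), σ j ≤ (k + θ) / Real.sqrt (k + θ^2) := by
  obtain ⟨hθ0, hθ1⟩ := hθ
  set S := ∑ j ∈ Icc 1 k, σ j
  have hk : (0 : ℝ) < k := by exact_mod_cast hk1
  have hratio' : k * σ (k + 1) ≤ θ * S := by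
    have := mul_le_mul_of_nonneg_left hratio hk.le
    rwa [← mul_assoc, mul_div_cancel₀ _ hk.ne'] at this
  have hcs : S + θ * σ (k + 1) ≤ √(k + θ ^ 2) := by
    simpa [hnorm] using sum_Icc_add_mul_le_sqrt_mul_sqrt σ k θ
  have hroot : 0 < √(k + θ ^ 2) := by positivity
  rw [sum_Icc_succ_top (by omega), le_div_iff₀ hroot]
  refine le_of_mul_le_mul_right ?_ hroot
  calc (S + σ (k + 1)) * √(k + θ ^ 2) * √(k + θ ^ 2) = (k + θ ^ 2) * (S + σ (k + 1)) := by
        rw [mul_assoc, Real.mul_self_sqrt (by positivity), mul_comm]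
    _ ≤ (k + θ) * (S + θ * σ (k + 1)) := add_mul_le_of_mul_le hθ1.le hratio'
    _ ≤ (k + θ) * √(k + θ ^ 2) := by gcongr

theorem stmt_3 (d k : ℕ) (hd : 2 ≤ d) (hk1 : 1 ≤ k) (hkd : k ≤ d - 1)
    (θ : ℝ) (hθ : θ ∈ Set.Ico (0:ℝ) 1) (σ : ℕ → ℝ)
    (hnn : ∀ j ∈ Finset.Icc 1 (k+1), 0 ≤ σ j)
    (hmono : ∀ i ∈ Finset.Icc 1 (k+1), ∀ j ∈ Finset.Icc 1 (k+1), i ≤ j → σ j ≤ σ i)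
    (hnorm : ∑ j ∈ Finset.Icc 1 (k+1), (σ j)^2 = 1)
    (hratio : σ (k+1) ≤ θ / k * ∑ j ∈ Finset.Icc 1 k, σ j)
    (hzero : θ = 0 → σ (k+1) = 0) :
    ∑ j ∈ Finset.Icc 1 (k+1), σ j ≤ (k + θ) / Real.sqrt (k + θ^2) :=
  stmt_3_general k hk1 θ hθ σ hnorm hratio
end

section
/- With the setup of the previous bound (∑ σⱼ² = 1, σ_{k+1} ≤ (θ/k)∑_{j=1}^k σⱼ, θ ∈ (0,1)), equality ∑_{j=1}^{k+1} σⱼ = (k+θ)/√(k+θ²) holds if and only if σ₁ = ⋯ = σ_k = 1/√(k+θ²) and σ_{k+1} = θ/√(k+θ²). -/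
/-!
Put `r = √(k + θ²)` and let `u = (1/r, …, 1/r, θ/r)`, a unit vector. Expanding
`‖σ - u‖² = 2 - 2⟪σ, u⟫` gives `∑_{j ≤ k} σⱼ + θ σ_{k+1} ≤ r`, and together with
`k σ_{k+1} ≤ θ ∑_{j ≤ k} σⱼ` this yields `σ_{k+1} ≤ θ / r`. Hence
`(k + θ)/r - ∑ σⱼ = (r/2) ‖σ - u‖² + (1 - θ)(θ/r - σ_{k+1})` is a sum of two nonnegative terms,
and it vanishes exactly when `σ = u`.
-/

open Finset

section
variable {ι : Type*} {s : Finset ι} {σ : ι → ℝ} {θ t r : ℝ}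

theorem sum_sq_sub_inv_add_sq_sub_div (hr : r ^ 2 = #s + θ ^ 2) (hr0 : r ≠ 0) :
    ∑ j ∈ s, (σ j - 1 / r) ^ 2 + (t - θ / r) ^ 2
      = ∑ j ∈ s, σ j ^ 2 + t ^ 2 + 1 - 2 * (∑ j ∈ s, σ j + θ * t) / r := by
  simp only [sub_sq, sum_add_distrib, sum_sub_distrib, ← sum_mul, ← mul_sum, sum_const,
    nsmul_eq_mul]
  field_simp
  linear_combination (-1 : ℝ) * hr

theorem sum_add_mul_le (hnorm : ∑ j ∈ s, σ j ^ 2 + t ^ 2 = 1) (hr : r ^ 2 = #s + θ ^ 2)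
    (hr0 : 0 < r) : ∑ j ∈ s, σ j + θ * t ≤ r := by
  have h := sum_sq_sub_inv_add_sq_sub_div (σ := σ) (t := t) hr hr0.ne'
  have hD : 0 ≤ ∑ j ∈ s, (σ j - 1 / r) ^ 2 + (t - θ / r) ^ 2 := by positivity
  rw [h, hnorm, mul_div_assoc] at hD
  exact (div_le_one hr0).1 (by linarith)

theorem le_div_of_card_mul_le (hθ : 0 ≤ θ) (hnorm : ∑ j ∈ s, σ j ^ 2 + t ^ 2 = 1)
    (hr : r ^ 2 = #s + θ ^ 2) (hr0 : 0 < r) (hratio : #s * t ≤ θ * ∑ j ∈ s, σ j) :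
    t ≤ θ / r := by
  have h := mul_le_mul_of_nonneg_left (sum_add_mul_le hnorm hr hr0) hθ
  have key : r * (t * r) ≤ r * θ := by linear_combination t * hr + hratio + h
  rw [le_div_iff₀ hr0]
  exact le_of_mul_le_mul_left key hr0

theorem div_sub_sum_add_eq (hnorm : ∑ j ∈ s, σ j ^ 2 + t ^ 2 = 1) (hr : r ^ 2 = #s + θ ^ 2)
    (hr0 : r ≠ 0) :
    (#s + θ) / r - (∑ j ∈ s, σ j + t)
      = r / 2 * (∑ j ∈ s, (σ j - 1 / r) ^ 2 + (t - θ / r) ^ 2) + (1 - θ) * (θ / r - t) := by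
  rw [sum_sq_sub_inv_add_sq_sub_div hr hr0, hnorm]
  field_simp
  linear_combination (-2 : ℝ) * hr

theorem sum_sq_sub_add_sq_sub_eq_zero_iff {a b : ℝ} :
    ∑ j ∈ s, (σ j - a) ^ 2 + (t - b) ^ 2 = 0 ↔ (∀ j ∈ s, σ j = a) ∧ t = b := by
  rw [add_eq_zero_iff_of_nonneg (by positivity) (by positivity),
    sum_eq_zero_iff_of_nonneg fun _ _ ↦ sq_nonneg _]
  simp only [sq_eq_zero_iff, sub_eq_zero]

theorem sum_add_eq_div_iff (hθ0 : 0 ≤ θ) (hθ1 : θ < 1) (hnorm : ∑ j ∈ s, σ j ^ 2 + t ^ 2 = 1)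
    (hr : r ^ 2 = #s + θ ^ 2) (hr0 : 0 < r) (hratio : #s * t ≤ θ * ∑ j ∈ s, σ j) :
    ∑ j ∈ s, σ j + t = (#s + θ) / r ↔ (∀ j ∈ s, σ j = 1 / r) ∧ t = θ / r := by
  have gap := div_sub_sum_add_eq (σ := σ) (t := t) hnorm hr hr0.ne'
  rw [← sum_sq_sub_add_sq_sub_eq_zero_iff]
  constructor
  · intro h
    have hD : 0 ≤ ∑ j ∈ s, (σ j - 1 / r) ^ 2 + (t - θ / r) ^ 2 := by positivity
    have ht : 0 ≤ (1 - θ) * (θ / r - t) := mul_nonneg (sub_nonneg.2 hθ1.le)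
      (sub_nonneg.2 (le_div_of_card_mul_le hθ0 hnorm hr hr0 hratio))
    rw [h, sub_self, eq_comm, add_eq_zero_iff_of_nonneg (by positivity) ht] at gap
    exact (mul_eq_zero.1 gap.1).resolve_left (by positivity)
  · intro hD
    have ht : t = θ / r := (sum_sq_sub_add_sq_sub_eq_zero_iff.1 hD).2
    rw [hD, mul_zero, zero_add, ← ht, sub_self, mul_zero] at gap
    linarith

end

theorem stmt_4_general (k : ℕ) (hk1 : 1 ≤ k)
    (θ : ℝ) (hθ : θ ∈ Set.Ioo (0:ℝ) 1) (σ : ℕ → ℝ)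
    (hnorm : ∑ j ∈ Finset.Icc 1 (k+1), (σ j)^2 = 1)
    (hratio : σ (k+1) ≤ θ / k * ∑ j ∈ Finset.Icc 1 k, σ j) :
    (∑ j ∈ Finset.Icc 1 (k+1), σ j = (k + θ) / Real.sqrt (k + θ^2)) ↔
      ((∀ j ∈ Finset.Icc 1 k, σ j = 1 / Real.sqrt (k + θ^2)) ∧
        σ (k+1) = θ / Real.sqrt (k + θ^2)) := by
  obtain ⟨hθ0, hθ1⟩ := hθ
  have hsplit (f : ℕ → ℝ) : ∑ j ∈ Icc 1 (k + 1), f j = ∑ j ∈ Icc 1 k, f j + f (k + 1) :=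
    sum_Icc_succ_top (by omega) f
  have hcard : (#(Icc 1 k) : ℝ) = k := by simp
  have hkθ : (0 : ℝ) < k + θ ^ 2 := by positivity
  have hratio' : #(Icc 1 k) * σ (k + 1) ≤ θ * ∑ j ∈ Icc 1 k, σ j := by
    have hk0 : (0 : ℝ) < k := by exact_mod_cast hk1
    rw [div_mul_eq_mul_div, le_div_iff₀ hk0] at hratio
    rw [hcard]
    linarith
  rw [hsplit] at hnorm ⊢
  have key := sum_add_eq_div_iff hθ0.le hθ1 hnorm
    (by rw [hcard, Real.sq_sqrt hkθ.le]) (Real.sqrt_pos.2 hkθ) hratio'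
  rwa [hcard] at key

theorem stmt_4 (k : ℕ) (hk1 : 1 ≤ k)
    (θ : ℝ) (hθ : θ ∈ Set.Ioo (0:ℝ) 1) (σ : ℕ → ℝ)
    (hnn : ∀ j ∈ Finset.Icc 1 (k+1), 0 ≤ σ j)
    (hmono : ∀ i ∈ Finset.Icc 1 (k+1), ∀ j ∈ Finset.Icc 1 (k+1), i ≤ j → σ j ≤ σ i)
    (hnorm : ∑ j ∈ Finset.Icc 1 (k+1), (σ j)^2 = 1)
    (hratio : σ (k+1) ≤ θ / k * ∑ j ∈ Finset.Icc 1 k, σ j) :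
    (∑ j ∈ Finset.Icc 1 (k+1), σ j = (k + θ) / Real.sqrt (k + θ^2)) ↔
      ((∀ j ∈ Finset.Icc 1 k, σ j = 1 / Real.sqrt (k + θ^2)) ∧
        σ (k+1) = θ / Real.sqrt (k + θ^2)) :=
  stmt_4_general k hk1 θ hθ σ hnorm hratio
end

section
/- Fix d ≥ 2, an integer k with 1 ≤ k ≤ d−1, and θ ∈ [0,1). Let ψ = ∑_{j=1}^{k+1} sⱼ eⱼ ⊗ eⱼ with s₁ ≥ … ≥ s_{k+1} ≥ 0, ∑ sⱼ² = 1, and s_{k+1} ≤ (θ/k)∑_{j=1}^k sⱼ. Let ω = (1/√d)∑_{i=1}^d eᵢ ⊗ eᵢ. Then |⟨ω, ψ⟩|² ≤ (k+θ)²/(d(k+θ²)), with equality attained for s₁ = ⋯ = s_k = 1/√(k+θ²) and s_{k+1} = θ/√(k+θ²). -/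
/-- The standard Hermitian inner product. -/
noncomputable def hermInner {ι : Type*} [Fintype ι] (a b : ι → ℂ) : ℂ :=
  ∑ i, star (a i) * b i

/-!
Both ω and ψ are diagonal in the product basis, so `⟨ω, ψ⟩ = (s₀ + ⋯ + s_k) / √d`. Writing
`A = s₀ + ⋯ + s_{k-1}` and `b = s_k`, Cauchy–Schwarz gives `A² + k b² ≤ k`, and the constraint
`k b ≤ θ A` gives `k (k + θ²) (A + b)² ≤ (k + θ)² (A² + k b²)`: the difference factors as
`(θ A - k b) (A (2k - θk + θ) - k (k + 2θ - 1) b)`, and by the same constraint the second factor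
is at least `2 A (k + θ) (1 - θ) ≥ 0`.
-/

open Finset

/-- The vector `∑ᵢ gᵢ eᵢ ⊗ eᵢ` of `ℂ^d ⊗ ℂ^d`; indices start at `0`, so the paper's `s_{k+1}` is
`g k`. -/
noncomputable def diagState (d : ℕ) (g : ℕ → ℝ) : Fin d × Fin d → ℂ :=
  fun p => if p.1 = p.2 then ((g p.1.val : ℝ) : ℂ) else 0

theorem hermInner_diagState (d : ℕ) (f g : ℕ → ℝ) :
    hermInner (diagState d f) (diagState d g) = ((∑ i ∈ range d, f i * g i : ℝ) : ℂ) := by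
  rw [hermInner, Fintype.sum_prod_type]
  simp only [diagState, apply_ite star, star_zero, ite_mul, mul_ite, mul_zero, zero_mul,
    Finset.sum_ite_eq, Finset.mem_univ, if_true]
  push_cast
  simp only [Complex.star_def, Complex.conj_ofReal]
  exact Fin.sum_univ_eq_sum_range (fun i => (f i : ℂ) * g i) d

theorem sq_norm_hermInner_maxEntangled (d : ℕ) (g : ℕ → ℝ) :
    ‖hermInner (diagState d fun _ => (Real.sqrt d)⁻¹) (diagState d g)‖ ^ 2
      = (∑ i ∈ range d, g i) ^ 2 / d := by
  rw [hermInner_diagState, ← mul_sum, Complex.norm_real, Real.norm_eq_abs, sq_abs, mul_pow,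
    inv_pow, Real.sq_sqrt d.cast_nonneg, inv_mul_eq_div]

theorem sum_range_eq_of_eq_zero {d n : ℕ} (hnd : n ≤ d) {g : ℕ → ℝ} (hg : ∀ j, n ≤ j → g j = 0) :
    ∑ i ∈ range d, g i = ∑ i ∈ range n, g i :=
  (sum_subset (range_subset_range.2 hnd) fun j _ hj => hg j (by simpa using hj)).symm

theorem sq_add_mul_le_of_mul_le (K θ A b : ℝ) (hK : 1 ≤ K) (hθ0 : 0 ≤ θ) (hθ1 : θ ≤ 1)
    (hA : 0 ≤ A) (hr : K * b ≤ θ * A) :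
    K * (K + θ ^ 2) * (A + b) ^ 2 ≤ (K + θ) ^ 2 * (A ^ 2 + K * b ^ 2) := by
  have hfactor : 0 ≤ A * (2 * K - θ * K + θ) - K * (K + 2 * θ - 1) * b := by
    nlinarith [mul_le_mul_of_nonneg_left hr (show 0 ≤ K + 2 * θ - 1 by linarith),
      mul_nonneg (mul_nonneg hA (sub_nonneg.2 hθ1)) (show 0 ≤ K + θ by linarith)]
  have hid : (K + θ) ^ 2 * (A ^ 2 + K * b ^ 2) - K * (K + θ ^ 2) * (A + b) ^ 2
      = (θ * A - K * b) * (A * (2 * K - θ * K + θ) - K * (K + 2 * θ - 1) * b) := by ring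
  nlinarith [mul_nonneg (sub_nonneg.2 hr) hfactor]

theorem mul_sq_sum_le_of_ratio (k : ℕ) (hk : 1 ≤ k) (θ : ℝ) (hθ : θ ∈ Set.Icc (0 : ℝ) 1)
    (s : ℕ → ℝ) (hnn : ∀ j, 0 ≤ s j) (hnorm : ∑ j ∈ range (k + 1), s j ^ 2 = 1)
    (hratio : s k ≤ θ / k * ∑ j ∈ range k, s j) :
    ((k : ℝ) + θ ^ 2) * (∑ j ∈ range (k + 1), s j) ^ 2 ≤ ((k : ℝ) + θ) ^ 2 := by
  have hK : (1 : ℝ) ≤ k := by exact_mod_cast hk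
  set A := ∑ j ∈ range k, s j
  have hcs : A ^ 2 ≤ k * ∑ j ∈ range k, s j ^ 2 := by
    simpa using sq_sum_le_card_mul_sum_sq (s := range k) (f := s)
  have hr : (k : ℝ) * s k ≤ θ * A := by
    calc (k : ℝ) * s k ≤ k * (θ / k * A) := mul_le_mul_of_nonneg_left hratio (by linarith)
      _ = θ * A := by field_simp
  have hmain := sq_add_mul_le_of_mul_le k θ A (s k) hK hθ.1 hθ.2 (sum_nonneg fun j _ => hnn j) hr
  rw [sum_range_succ] at hnorm ⊢
  have hsq : A ^ 2 + k * s k ^ 2 ≤ k := by nlinarith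
  have : (k : ℝ) * ((k + θ ^ 2) * (A + s k) ^ 2) ≤ k * (k + θ) ^ 2 := by
    nlinarith [mul_le_mul_of_nonneg_left hsq (sq_nonneg ((k : ℝ) + θ))]
  exact le_of_mul_le_mul_left this (by linarith)

noncomputable def optimalSchmidt (k : ℕ) (θ : ℝ) : ℕ → ℝ :=
  fun i => if i < k then (Real.sqrt ((k : ℝ) + θ ^ 2))⁻¹
    else if i = k then θ / Real.sqrt ((k : ℝ) + θ ^ 2) else 0

theorem sum_range_succ_optimalSchmidt (k : ℕ) (θ : ℝ) :
    ∑ i ∈ range (k + 1), optimalSchmidt k θ i = ((k : ℝ) + θ) / Real.sqrt ((k : ℝ) + θ ^ 2) := by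
  simp [sum_range_succ, optimalSchmidt, sum_ite_of_true, div_eq_mul_inv, add_mul]

theorem stmt_11_general (d k : ℕ) (hk1 : 1 ≤ k) (hkd : k ≤ d - 1)
    (θ : ℝ) (hθ : θ ∈ Set.Ico (0:ℝ) 1) (s : ℕ → ℝ)
    (hnn : ∀ j, 0 ≤ s j)
    (hsupp : ∀ j, k + 1 ≤ j → s j = 0)
    (hnorm : ∑ j ∈ Finset.range (k+1), (s j)^2 = 1)
    (hratio : s k ≤ θ / k * ∑ j ∈ Finset.range k, s j) :
    ‖(hermInner
        (fun p : Fin d × Fin d => if p.1 = p.2 then (((Real.sqrt d)⁻¹ : ℝ) : ℂ) else 0)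
        (fun p : Fin d × Fin d => if p.1 = p.2 then ((s p.1.val : ℝ) : ℂ) else 0))‖ ^ 2
      ≤ ((k:ℝ) + θ)^2 / (d * ((k:ℝ) + θ^2)) ∧
    ‖(hermInner
        (fun p : Fin d × Fin d => if p.1 = p.2 then (((Real.sqrt d)⁻¹ : ℝ) : ℂ) else 0)
        (fun p : Fin d × Fin d => if p.1 = p.2 then
            (((if p.1.val < k then (Real.sqrt ((k:ℝ) + θ^2))⁻¹
               else if p.1.val = k then θ / Real.sqrt ((k:ℝ) + θ^2) else 0) : ℝ) : ℂ)
          else 0))‖ ^ 2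
      = ((k:ℝ) + θ)^2 / (d * ((k:ℝ) + θ^2)) := by
  have hkd' : k + 1 ≤ d := by omega
  have hd : (0 : ℝ) < d := by exact_mod_cast (show 0 < d by omega)
  have hR : (0 : ℝ) < k + θ ^ 2 := by positivity
  refine ⟨(sq_norm_hermInner_maxEntangled d s).trans_le ?_,
    (sq_norm_hermInner_maxEntangled d (optimalSchmidt k θ)).trans ?_⟩
  · rw [sum_range_eq_of_eq_zero hkd' hsupp, div_le_div_iff₀ hd (by positivity)]
    nlinarith [mul_sq_sum_le_of_ratio k hk1 θ (Set.Ico_subset_Icc_self hθ) s hnn hnorm hratio]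
  · rw [sum_range_eq_of_eq_zero hkd' fun j hj => by
      simp only [optimalSchmidt, if_neg (show ¬ j < k by omega), if_neg (show j ≠ k by omega)],
      sum_range_succ_optimalSchmidt, div_pow, Real.sq_sqrt hR.le]
    field_simp

theorem stmt_11 (d k : ℕ) (hd : 2 ≤ d) (hk1 : 1 ≤ k) (hkd : k ≤ d - 1)
    (θ : ℝ) (hθ : θ ∈ Set.Ico (0:ℝ) 1) (s : ℕ → ℝ)
    (hnn : ∀ j, 0 ≤ s j)
    (hmono : ∀ i j, i ≤ j → s j ≤ s i)
    (hsupp : ∀ j, k + 1 ≤ j → s j = 0)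
    (hnorm : ∑ j ∈ Finset.range (k+1), (s j)^2 = 1)
    (hratio : s k ≤ θ / k * ∑ j ∈ Finset.range k, s j) :
    ‖(hermInner
        (fun p : Fin d × Fin d => if p.1 = p.2 then (((Real.sqrt d)⁻¹ : ℝ) : ℂ) else 0)
        (fun p : Fin d × Fin d => if p.1 = p.2 then ((s p.1.val : ℝ) : ℂ) else 0))‖ ^ 2
      ≤ ((k:ℝ) + θ)^2 / (d * ((k:ℝ) + θ^2)) ∧
    ‖(hermInner
        (fun p : Fin d × Fin d => if p.1 = p.2 then (((Real.sqrt d)⁻¹ : ℝ) : ℂ) else 0)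
        (fun p : Fin d × Fin d => if p.1 = p.2 then
            (((if p.1.val < k then (Real.sqrt ((k:ℝ) + θ^2))⁻¹
               else if p.1.val = k then θ / Real.sqrt ((k:ℝ) + θ^2) else 0) : ℝ) : ℂ)
          else 0))‖ ^ 2
      = ((k:ℝ) + θ)^2 / (d * ((k:ℝ) + θ^2)) :=
  stmt_11_general d k hk1 hkd θ hθ s hnn hsupp hnorm hratio
end
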